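/- Let c ≥ 1 and let E ⊂ ℂ be a compact set with the chord–arc property with constant c: any two points z, ζ ∈ E can be joined by a continuously differentiable path γ : [0,1] → ℂ with γ(0) = z, γ(1) = ζ, γ([0,1]) ⊆ E, and length ∫_0^1 |γ′(t)| dt ≤ c·|z − ζ|. Let r ≥ 0, k ≥ 1 be integers and let g_0, g_1, …, g_{r+1} : E → ℂ be continuous functions such that for each j = 0,…,r, g_j is a primitive of g_{j+1} along arcs, i.e. g_j(γ(1)) − g_j(γ(0)) = ∫_0^1 g_{j+1}(γ(t))·γ′(t) dt for every continuously differentiable path γ : [0,1] → ℂ with range contained in E. Then for every z ∈ E and every δ > 0, the best uniform approximation error of g_0 on E ∩ D̄(z,δ) by complex polynomials of degree at most k + r satisfies E_{k+r}(g_0, E ∩ D̄(z,δ)) ≤ (c·(1+c)^r / r!)·δ^{r+1}·ω_{g_{r+1},k,E}(c·δ). -/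

import Mathlib

set_option maxHeartbeats 1000000

open Polynomial intervalIntegral MeasureTheory Set

/-- The uniform (sup) norm of `g` on the set `E ⊆ ℂ`. -/
noncomputable def supNorm (E : Set ℂ) (g : ℂ → ℂ) : ℝ :=
  ⨆ z : E, ‖g z‖

/-- `E_n(f,E)`: the error of best uniform approximation of `f` on `E` by
complex polynomials of degree at most `n`. -/
noncomputable def bestApprox (n : ℕ) (E : Set ℂ) (f : ℂ → ℂ) : ℝ :=
  ⨅ p : {p : Polynomial ℂ // p.natDegree ≤ n},
    supNorm E (fun w => f w - (p : Polynomial ℂ).eval w)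

/-- `ω_{f,k,E}(δ)`: the k-th (global) modulus of continuity of `f` on `E`. -/
noncomputable def modulus (f : ℂ → ℂ) (k : ℕ) (E : Set ℂ) (δ : ℝ) : ℝ :=
  ⨆ z : E, bestApprox (k - 1) (E ∩ Metric.closedBall (z : ℂ) δ) f

/-! ### Polynomial antiderivatives -/

/-- Formal antiderivative of a polynomial. -/
noncomputable def pintegral (q : Polynomial ℂ) : Polynomial ℂ :=
  q.sum fun n a => C (a / (n + 1)) * X ^ (n + 1)

lemma derivative_pintegral (q : Polynomial ℂ) : (pintegral q).derivative = q := by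
  unfold pintegral
  rw [Polynomial.sum, derivative_sum]
  conv_rhs => rw [← Polynomial.sum_C_mul_X_pow_eq q]
  rw [Polynomial.sum]
  refine Finset.sum_congr rfl fun n _ => ?_
  rw [derivative_C_mul, derivative_X_pow, ← mul_assoc, ← C_mul, Nat.add_sub_cancel,
    Nat.cast_add, Nat.cast_one, div_mul_cancel₀ _ (by exact_mod_cast Nat.succ_ne_zero n)]

lemma natDegree_pintegral_le (q : Polynomial ℂ) : (pintegral q).natDegree ≤ q.natDegree + 1 := by
  unfold pintegral
  rw [Polynomial.sum]
  refine natDegree_sum_le_of_forall_le _ _ fun n hn => ?_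
  exact (natDegree_C_mul_X_pow_le _ _).trans
    (Nat.succ_le_succ (le_natDegree_of_mem_supp n hn))

/-- Antiderivative of `q` taking value `a` at `z`. -/
noncomputable def antider (q : Polynomial ℂ) (z a : ℂ) : Polynomial ℂ :=
  pintegral q + C (a - (pintegral q).eval z)

lemma derivative_antider (q : Polynomial ℂ) (z a : ℂ) :
    (antider q z a).derivative = q := by
  rw [antider, derivative_add, derivative_C, add_zero, derivative_pintegral]

lemma eval_antider (q : Polynomial ℂ) (z a : ℂ) : (antider q z a).eval z = a := by
  simp [antider]

lemma natDegree_antider_le (q : Polynomial ℂ) (z a : ℂ) :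
    (antider q z a).natDegree ≤ q.natDegree + 1 := by
  refine (natDegree_add_le _ _).trans ?_
  simp [natDegree_pintegral_le q]

/-! ### Path lemmas -/

lemma len_hasDerivAt {γ : ℝ → ℂ} (hγ : ContDiff ℝ 1 γ) (t : ℝ) :
    HasDerivAt (fun s => ∫ u in (0:ℝ)..s, ‖deriv γ u‖) ‖deriv γ t‖ t :=
  (((hγ.continuous_deriv le_rfl).norm).integral_hasStrictDerivAt 0 t).hasDerivAt

lemma len_continuous {γ : ℝ → ℂ} (hγ : ContDiff ℝ 1 γ) :
    Continuous (fun s => ∫ u in (0:ℝ)..s, ‖deriv γ u‖) := by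
  have : Differentiable ℝ (fun s => ∫ u in (0:ℝ)..s, ‖deriv γ u‖) :=
    fun t => (len_hasDerivAt hγ t).differentiableAt
  exact this.continuous

lemma dist_le_len {γ : ℝ → ℂ} (hγ : ContDiff ℝ 1 γ) {t : ℝ} (ht : 0 ≤ t) :
    ‖γ t - γ 0‖ ≤ ∫ u in (0:ℝ)..t, ‖deriv γ u‖ := by
  have h1 : γ t - γ 0 = ∫ u in (0:ℝ)..t, deriv γ u :=
    (integral_deriv_eq_sub (fun x _ => (hγ.differentiable one_ne_zero).differentiableAt)
      ((hγ.continuous_deriv le_rfl).intervalIntegrable _ _)).symm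
  rw [h1]
  exact intervalIntegral.norm_integral_le_integral_norm ht

lemma len_mono {γ : ℝ → ℂ} (hγ : ContDiff ℝ 1 γ) {s t : ℝ} (hst : s ≤ t) :
    (∫ u in (0:ℝ)..s, ‖deriv γ u‖) ≤ ∫ u in (0:ℝ)..t, ‖deriv γ u‖ := by
  have hInt : ∀ a b : ℝ, IntervalIntegrable (fun u => ‖deriv γ u‖) volume a b :=
    fun a b => ((hγ.continuous_deriv le_rfl).norm).intervalIntegrable _ _
  have := intervalIntegral.integral_add_adjacent_intervals (a := (0:ℝ)) (b := s) (c := t)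
    (hInt 0 s) (hInt s t)
  rw [← this]
  have : 0 ≤ ∫ u in s..t, ‖deriv γ u‖ :=
    intervalIntegral.integral_nonneg hst (fun u _ => norm_nonneg _)
  linarith

lemma len_nonneg {γ : ℝ → ℂ} {t : ℝ} (ht : 0 ≤ t) :
    0 ≤ ∫ u in (0:ℝ)..t, ‖deriv γ u‖ :=
  intervalIntegral.integral_nonneg ht (fun _ _ => norm_nonneg _)

/-- The primitive identity restricted to a subpath. -/
lemma prim_subpath {E : Set ℂ} {f F : ℂ → ℂ} {γ : ℝ → ℂ}
    (hpr : ∀ γ' : ℝ → ℂ, ContDiff ℝ 1 γ' → γ' '' Set.Icc 0 1 ⊆ E →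
      f (γ' 1) - f (γ' 0) = ∫ s in (0:ℝ)..1, F (γ' s) * deriv γ' s)
    (hγ : ContDiff ℝ 1 γ) (himg : γ '' Set.Icc 0 1 ⊆ E) {t : ℝ} (ht : t ∈ Set.Icc (0:ℝ) 1) :
    f (γ t) - f (γ 0) = ∫ u in (0:ℝ)..t, F (γ u) * deriv γ u := by
  set γ' : ℝ → ℂ := fun s => γ (t * s) with hγ'def
  have hγ' : ContDiff ℝ 1 γ' := hγ.comp (contDiff_const.mul contDiff_id)
  have himg' : γ' '' Set.Icc 0 1 ⊆ E := by
    rintro - ⟨s, hs, rfl⟩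
    exact himg ⟨t * s, ⟨mul_nonneg ht.1 hs.1,
      (mul_le_one₀ ht.2 hs.1 hs.2 : t * s ≤ 1)⟩, rfl⟩
  have hderiv : ∀ s : ℝ, deriv γ' s = t • deriv γ (t * s) := by
    intro s
    have h1 : HasDerivAt (fun s : ℝ => t * s) t s := by
      simpa using (hasDerivAt_id s).const_mul t
    have h2 : HasDerivAt γ (deriv γ (t * s)) (t * s) :=
      ((hγ.differentiable one_ne_zero) (t * s)).hasDerivAt
    exact (h2.scomp s h1).deriv
  have key := hpr γ' hγ' himg'
  simp only [hγ'def, mul_one, mul_zero] at key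
  rw [key]
  calc (∫ s in (0:ℝ)..1, F (γ (t * s)) * deriv γ' s)
      = ∫ s in (0:ℝ)..1, t • ((fun u => F (γ u) * deriv γ u) (t * s)) := by
        refine intervalIntegral.integral_congr fun s _ => ?_
        simp only [hγ'def]
        rw [hderiv s, mul_smul_comm]
    _ = t • ∫ s in (0:ℝ)..1, (fun u => F (γ u) * deriv γ u) (t * s) := by
        rw [intervalIntegral.integral_smul]
    _ = ∫ u in (t * 0)..(t * 1), F (γ u) * deriv γ u :=
        intervalIntegral.smul_integral_comp_mul_left (fun u => F (γ u) * deriv γ u) t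
    _ = ∫ u in (0:ℝ)..t, F (γ u) * deriv γ u := by rw [mul_zero, mul_one]

/-- FTC for a polynomial along a `C¹` path. -/
lemma poly_subpath (Q : Polynomial ℂ) {γ : ℝ → ℂ} (hγ : ContDiff ℝ 1 γ) (t : ℝ) :
    Q.eval (γ t) - Q.eval (γ 0) = ∫ u in (0:ℝ)..t, Q.derivative.eval (γ u) * deriv γ u := by
  have hd : ∀ u : ℝ, HasDerivAt (fun x => Q.eval (γ x))
      (Q.derivative.eval (γ u) * deriv γ u) u := by
    intro u
    have h2 : HasDerivAt (fun w : ℂ => Q.eval w) (Q.derivative.eval (γ u)) (γ u) :=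
      Q.hasDerivAt (γ u)
    have h1 : HasDerivAt γ (deriv γ u) u := ((hγ.differentiable one_ne_zero) u).hasDerivAt
    have := h2.scomp u h1
    exact this.congr_deriv (by rw [smul_eq_mul, mul_comm])
  rw [intervalIntegral.integral_eq_sub_of_hasDerivAt (fun u _ => hd u)
    ((((Q.derivative.continuous).comp hγ.continuous).mul
      (hγ.continuous_deriv le_rfl)).intervalIntegrable _ _)]

/-! ### The iterated antiderivative sequence -/

/-- Iterated antiderivatives of `p`, anchored at `z` with values matching `g`. -/
noncomputable def Qseq (g : ℕ → ℂ → ℂ) (r : ℕ) (z : ℂ) (p : Polynomial ℂ) : ℕ → Polynomial ℂ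
  | 0 => p
  | (m + 1) => antider (Qseq g r z p m) z (g (r - m) z)

lemma derivative_Qseq_succ (g : ℕ → ℂ → ℂ) (r : ℕ) (z : ℂ) (p : Polynomial ℂ) (m : ℕ) :
    (Qseq g r z p (m + 1)).derivative = Qseq g r z p m := by
  rw [Qseq, derivative_antider]

lemma eval_Qseq_succ (g : ℕ → ℂ → ℂ) (r : ℕ) (z : ℂ) (p : Polynomial ℂ) (m : ℕ) :
    (Qseq g r z p (m + 1)).eval z = g (r - m) z := by
  rw [Qseq, eval_antider]

lemma natDegree_Qseq_le (g : ℕ → ℂ → ℂ) (r : ℕ) (z : ℂ) (p : Polynomial ℂ) (m : ℕ) :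
    (Qseq g r z p m).natDegree ≤ p.natDegree + m := by
  induction m with
  | zero => simp [Qseq]
  | succ m ih => exact (natDegree_antider_le _ _ _).trans (by omega)

/-! ### The key Taylor-remainder estimate along a path -/

lemma key_estimate
    (E : Set ℂ) (r : ℕ) (g : ℕ → ℂ → ℂ)
    (hg : ∀ j ≤ r + 1, ContinuousOn (g j) E)
    (hprim : ∀ j ≤ r, ∀ γ : ℝ → ℂ, ContDiff ℝ 1 γ → γ '' Set.Icc 0 1 ⊆ E →
      g j (γ 1) - g j (γ 0) = ∫ t in (0:ℝ)..1, g (j + 1) (γ t) * deriv γ t)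
    (z : ℂ) (ρ : ℝ) (p : Polynomial ℂ) (M : ℝ)
    (hM : ∀ w ∈ E ∩ Metric.closedBall z ρ, ‖g (r + 1) w - p.eval w‖ ≤ M)
    (γ : ℝ → ℂ) (hγ : ContDiff ℝ 1 γ) (hγ0 : γ 0 = z)
    (himg : γ '' Set.Icc 0 1 ⊆ E)
    (hlen1 : (∫ u in (0:ℝ)..1, ‖deriv γ u‖) ≤ ρ) :
    ∀ m, m ≤ r + 1 → ∀ t ∈ Set.Icc (0:ℝ) 1,
      ‖g (r + 1 - m) (γ t) - (Qseq g r z p m).eval (γ t)‖ ≤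
        M * (∫ u in (0:ℝ)..t, ‖deriv γ u‖) ^ m / m.factorial := by
  set L : ℝ → ℝ := fun s => ∫ u in (0:ℝ)..s, ‖deriv γ u‖ with hLdef
  have hmemE : ∀ t ∈ Set.Icc (0:ℝ) 1, γ t ∈ E := fun t ht => himg ⟨t, ht, rfl⟩
  have hγE : ∀ t ∈ Set.Icc (0:ℝ) 1, γ t ∈ E ∩ Metric.closedBall z ρ := by
    intro t ht
    refine ⟨hmemE t ht, ?_⟩
    rw [Metric.mem_closedBall, dist_eq_norm, ← hγ0]
    exact (dist_le_len hγ ht.1).trans ((len_mono hγ ht.2).trans hlen1)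
  intro m
  induction m with
  | zero =>
    intro _ t ht
    simpa [Qseq] using hM _ (hγE t ht)
  | succ m ih =>
    intro hm1 t ht
    have hmr : m ≤ r := by omega
    have ihm := ih (by omega)
    set j := r - m with hjdef
    have hj : j ≤ r := Nat.sub_le r m
    have hj1 : j + 1 = r + 1 - m := by omega
    have hj2 : r + 1 - (m + 1) = j := by omega
    -- continuity facts
    have hγcont := hγ.continuous
    have hLcont : Continuous L := len_continuous hγ
    have hdγ : Continuous (deriv γ) := hγ.continuous_deriv le_rfl
    have hsub : Set.uIcc (0:ℝ) t ⊆ Set.Icc 0 1 := by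
      rw [Set.uIcc_of_le ht.1]
      exact Set.Icc_subset_Icc le_rfl ht.2
    have hψcont : ContinuousOn (fun u => g (j + 1) (γ u) - (Qseq g r z p m).eval (γ u))
        (Set.Icc (0:ℝ) 1) := by
      refine ContinuousOn.sub ?_ ?_
      · exact (hg (j + 1) (by omega)).comp hγcont.continuousOn hmemE
      · exact ((Qseq g r z p m).continuous.comp hγcont).continuousOn
    -- the integral identity
    have heq : g j (γ t) - (Qseq g r z p (m + 1)).eval (γ t) =
        ∫ u in (0:ℝ)..t, (g (j + 1) (γ u) - (Qseq g r z p m).eval (γ u)) * deriv γ u := by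
      have h1 := prim_subpath (hprim j hj) hγ himg ht
      have h2 := poly_subpath (Qseq g r z p (m + 1)) hγ t
      rw [derivative_Qseq_succ] at h2
      have h3 : g j (γ 0) = (Qseq g r z p (m + 1)).eval (γ 0) := by
        rw [hγ0, eval_Qseq_succ]
      have hint1 : IntervalIntegrable (fun u => g (j + 1) (γ u) * deriv γ u) volume 0 t := by
        refine ContinuousOn.intervalIntegrable ?_
        exact (((hg (j + 1) (by omega)).comp hγcont.continuousOn hmemE).mono hsub).mul
          hdγ.continuousOn
      have hint2 : IntervalIntegrable
          (fun u => (Qseq g r z p m).eval (γ u) * deriv γ u) volume 0 t :=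
        (((Qseq g r z p m).continuous.comp hγcont).mul hdγ).intervalIntegrable _ _
      have : g j (γ t) - (Qseq g r z p (m + 1)).eval (γ t) =
          (g j (γ t) - g j (γ 0)) -
            ((Qseq g r z p (m + 1)).eval (γ t) - (Qseq g r z p (m + 1)).eval (γ 0)) := by
        rw [h3]; ring
      rw [this, h1, h2, ← intervalIntegral.integral_sub hint1 hint2]
      exact intervalIntegral.integral_congr fun u _ => (sub_mul _ _ _).symm
    -- integrability for the comparison
    have hint3 : IntervalIntegrable
        (fun u => ‖(g (j + 1) (γ u) - (Qseq g r z p m).eval (γ u)) * deriv γ u‖) volume 0 t :=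
      ContinuousOn.intervalIntegrable (((hψcont.mono hsub).mul hdγ.continuousOn).norm)
    have hint4 : IntervalIntegrable
        (fun u => M * L u ^ m / (m.factorial : ℝ) * ‖deriv γ u‖) volume 0 t :=
      (((continuous_const.mul (hLcont.pow m)).div_const _).mul hdγ.norm).intervalIntegrable _ _
    -- the power integral
    have hIntPow : (∫ u in (0:ℝ)..t, L u ^ m * ‖deriv γ u‖) = L t ^ (m + 1) / (m + 1) := by
      have hD : ∀ u : ℝ, HasDerivAt (fun s => L s ^ (m + 1) / ((m:ℝ) + 1))
          (L u ^ m * ‖deriv γ u‖) u := by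
        intro u
        have h := ((len_hasDerivAt hγ u).pow (m + 1)).div_const ((m:ℝ) + 1)
        convert h using 1
        · rfl
        · rfl
        · rfl
        simp only [hLdef, Nat.add_sub_cancel, Nat.cast_add, Nat.cast_one]
        have hne : ((m:ℝ) + 1) ≠ 0 := by positivity
        field_simp
      rw [intervalIntegral.integral_eq_sub_of_hasDerivAt (fun u _ => hD u)
        (((hLcont.pow m).mul hdγ.norm).intervalIntegrable _ _)]
      have hL0 : L 0 = 0 := intervalIntegral.integral_same
      rw [hL0, zero_pow (Nat.succ_ne_zero m)]
      push_cast
      ring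
    -- put everything together
    have hbound : ∀ u ∈ Set.Icc (0:ℝ) t,
        ‖(g (j + 1) (γ u) - (Qseq g r z p m).eval (γ u)) * deriv γ u‖ ≤
          M * L u ^ m / (m.factorial : ℝ) * ‖deriv γ u‖ := by
      intro u hu
      have hu1 : u ∈ Set.Icc (0:ℝ) 1 := ⟨hu.1, hu.2.trans ht.2⟩
      rw [norm_mul]
      refine mul_le_mul_of_nonneg_right ?_ (norm_nonneg _)
      have := ihm u hu1
      rwa [← hj1] at this
    calc ‖g (r + 1 - (m + 1)) (γ t) - (Qseq g r z p (m + 1)).eval (γ t)‖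
        = ‖∫ u in (0:ℝ)..t,
            (g (j + 1) (γ u) - (Qseq g r z p m).eval (γ u)) * deriv γ u‖ := by
          rw [hj2, heq]
      _ ≤ ∫ u in (0:ℝ)..t,
            ‖(g (j + 1) (γ u) - (Qseq g r z p m).eval (γ u)) * deriv γ u‖ :=
          intervalIntegral.norm_integral_le_integral_norm ht.1
      _ ≤ ∫ u in (0:ℝ)..t, M * L u ^ m / (m.factorial : ℝ) * ‖deriv γ u‖ :=
          intervalIntegral.integral_mono_on ht.1 hint3 hint4 hbound
      _ = M / (m.factorial : ℝ) * ∫ u in (0:ℝ)..t, L u ^ m * ‖deriv γ u‖ := by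
          rw [← intervalIntegral.integral_const_mul]
          exact intervalIntegral.integral_congr fun u _ => by ring
      _ = M / (m.factorial : ℝ) * (L t ^ (m + 1) / (m + 1)) := by rw [hIntPow]
      _ = M * L t ^ (m + 1) / ((m + 1).factorial : ℝ) := by
          rw [Nat.factorial_succ, Nat.cast_mul, Nat.cast_add, Nat.cast_one,
            div_mul_div_comm, mul_comm (m.factorial : ℝ)]

/-! ### Sup-norm and best-approximation glue -/

lemma supNorm_nonneg (S : Set ℂ) (f : ℂ → ℂ) : 0 ≤ supNorm S f :=
  Real.iSup_nonneg fun _ => norm_nonneg _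

lemma bestApprox_nonneg (n : ℕ) (S : Set ℂ) (f : ℂ → ℂ) : 0 ≤ bestApprox n S f :=
  Real.iInf_nonneg fun _ => supNorm_nonneg _ _

lemma le_supNorm {S : Set ℂ} (hS : IsCompact S) {f : ℂ → ℂ} (hf : ContinuousOn f S)
    {w : ℂ} (hw : w ∈ S) : ‖f w‖ ≤ supNorm S f := by
  have hbdd : BddAbove (Set.range fun w : S => ‖f w‖) := by
    have himr : (Set.range fun w : S => ‖f w‖)
        = (fun w => ‖f w‖) '' S :=
      (Set.image_eq_range (fun w => ‖f w‖) S).symm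
    rw [himr]
    exact (hS.image_of_continuousOn
      (continuous_norm.comp_continuousOn hf)).bddAbove
  exact le_ciSup hbdd (⟨w, hw⟩ : S)

lemma supNorm_le {S : Set ℂ} (hne : S.Nonempty) {f : ℂ → ℂ} {B : ℝ}
    (h : ∀ w ∈ S, ‖f w‖ ≤ B) : supNorm S f ≤ B := by
  haveI : Nonempty S := hne.to_subtype
  exact ciSup_le fun w => h w w.2

lemma bestApprox_le (n : ℕ) (S : Set ℂ) (f : ℂ → ℂ) (q : Polynomial ℂ)
    (hq : q.natDegree ≤ n) :
    bestApprox n S f ≤ supNorm S (fun w => f w - q.eval w) := by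
  refine ciInf_le ⟨0, ?_⟩ (⟨q, hq⟩ : {p : Polynomial ℂ // p.natDegree ≤ n})
  rintro x ⟨p, rfl⟩
  exact supNorm_nonneg _ _

lemma bestApprox_le_modulus {E : Set ℂ} (hE : IsCompact E) {f : ℂ → ℂ}
    (hf : ContinuousOn f E) (k : ℕ) {z : ℂ} (hz : z ∈ E) {δ : ℝ} (hδ : 0 ≤ δ) :
    bestApprox (k - 1) (E ∩ Metric.closedBall z δ) f ≤ modulus f k E δ := by
  have hbdd : BddAbove (Set.range fun z : E =>
      bestApprox (k - 1) (E ∩ Metric.closedBall (z : ℂ) δ) f) := by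
    refine ⟨supNorm E f, ?_⟩
    rintro x ⟨z', rfl⟩
    have h1 : bestApprox (k - 1) (E ∩ Metric.closedBall (z' : ℂ) δ) f ≤
        supNorm (E ∩ Metric.closedBall (z' : ℂ) δ) (fun w => f w - (0 : Polynomial ℂ).eval w) :=
      bestApprox_le _ _ _ 0 (by simp)
    have h2 : supNorm (E ∩ Metric.closedBall (z' : ℂ) δ) (fun w => f w - (0 : Polynomial ℂ).eval w)
        = supNorm (E ∩ Metric.closedBall (z' : ℂ) δ) f := by
      simp only [Polynomial.eval_zero, sub_zero]
    have hne : (E ∩ Metric.closedBall (z' : ℂ) δ).Nonempty :=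
      ⟨(z' : ℂ), z'.2, Metric.mem_closedBall_self hδ⟩
    exact h1.trans (h2.trans_le (supNorm_le hne fun w hw => le_supNorm hE hf hw.1))
  exact le_ciSup hbdd (⟨z, hz⟩ : E)

lemma exists_near_bestApprox (n : ℕ) (S : Set ℂ) (f : ℂ → ℂ) {ε : ℝ} (hε : 0 < ε) :
    ∃ q : Polynomial ℂ, q.natDegree ≤ n ∧
      supNorm S (fun w => f w - q.eval w) < bestApprox n S f + ε := by
  haveI : Nonempty {q : Polynomial ℂ // q.natDegree ≤ n} := ⟨⟨0, by simp⟩⟩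
  obtain ⟨q, hq⟩ := exists_lt_of_ciInf_lt
    (lt_add_of_pos_right (bestApprox n S f) hε)
  exact ⟨q.1, q.2, hq⟩

/-! ### Main theorem -/

/-- Taylor-type local approximation for an iterated primitive: if `E` is compact with
the chord–arc property with constant `c ≥ 1`, and `g 0, …, g (r+1)` are continuous on
`E` with each `g j` a primitive of `g (j+1)` along arcs in `E` (for `j ≤ r`), then
`E_{k+r}(g 0, E ∩ D̄(z,δ)) ≤ (c(1+c)^r / r!) ⬝ δ^{r+1} ⬝ ω_{g_{r+1},k,E}(cδ)`. -/
theorem local_modulus_of_iterated_primitive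
    (c : ℝ) (hc : 1 ≤ c) (E : Set ℂ) (hE : IsCompact E)
    (harc : ∀ z ∈ E, ∀ ζ ∈ E, ∃ γ : ℝ → ℂ, ContDiff ℝ 1 γ ∧
      γ 0 = z ∧ γ 1 = ζ ∧ γ '' Set.Icc 0 1 ⊆ E ∧
      (∫ t in (0:ℝ)..1, ‖deriv γ t‖) ≤ c * ‖z - ζ‖)
    (r k : ℕ) (hk : 1 ≤ k)
    (g : ℕ → ℂ → ℂ) (hg : ∀ j ≤ r + 1, ContinuousOn (g j) E)
    (hprim : ∀ j ≤ r, ∀ γ : ℝ → ℂ, ContDiff ℝ 1 γ → γ '' Set.Icc 0 1 ⊆ E →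
      g j (γ 1) - g j (γ 0) = ∫ t in (0:ℝ)..1, g (j + 1) (γ t) * deriv γ t) :
    ∀ z ∈ E, ∀ δ : ℝ, 0 < δ →
      bestApprox (k + r) (E ∩ Metric.closedBall z δ) (g 0) ≤
        (c * (1 + c) ^ r / (r.factorial : ℝ)) * δ ^ (r + 1) *
          modulus (g (r + 1)) k E (c * δ) := by
  intro z hz δ hδ
  have hc0 : (0:ℝ) < c := lt_of_lt_of_le one_pos hc
  have hcδ : (0:ℝ) < c * δ := mul_pos hc0 hδ
  set A : ℝ := (c * δ) ^ (r + 1) / ((r + 1).factorial : ℝ) with hAdef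
  have hA : 0 < A := by positivity
  set ω : ℝ := modulus (g (r + 1)) k E (c * δ) with hωdef
  have hω0 : 0 ≤ ω := Real.iSup_nonneg fun _ => bestApprox_nonneg _ _ _
  have hmain : ∀ ε : ℝ, 0 < ε →
      bestApprox (k + r) (E ∩ Metric.closedBall z δ) (g 0) ≤ A * (ω + ε) := by
    intro ε hε
    set bA : ℝ := bestApprox (k - 1) (E ∩ Metric.closedBall z (c * δ)) (g (r + 1)) with hbAdef
    have hbA0 : 0 ≤ bA := bestApprox_nonneg _ _ _
    obtain ⟨p, hpdeg, hp⟩ := exists_near_bestApprox (k - 1)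
      (E ∩ Metric.closedBall z (c * δ)) (g (r + 1)) hε
    have hScomp : IsCompact (E ∩ Metric.closedBall z (c * δ)) :=
      hE.inter_right Metric.isClosed_closedBall
    have hM : ∀ w ∈ E ∩ Metric.closedBall z (c * δ), ‖g (r + 1) w - p.eval w‖ ≤ bA + ε := by
      intro w hw
      refine (le_supNorm hScomp ?_ hw).trans hp.le
      exact ((hg (r + 1) le_rfl).mono Set.inter_subset_left).sub
        (Polynomial.continuous p).continuousOn
    have hMnn : (0:ℝ) ≤ bA + ε := by positivity
    -- pointwise bound on E ∩ closedBall z δ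
    have hpt : ∀ ζ ∈ E ∩ Metric.closedBall z δ,
        ‖g 0 ζ - (Qseq g r z p (r + 1)).eval ζ‖ ≤ A * (bA + ε) := by
      intro ζ hζ
      obtain ⟨γ, hγ, hγ0, hγ1, himg, hlen⟩ := harc z hz ζ hζ.1
      have hlen' : (∫ u in (0:ℝ)..1, ‖deriv γ u‖) ≤ c * δ := by
        refine hlen.trans ?_
        have hzd : ‖z - ζ‖ ≤ δ := by
          rw [← dist_eq_norm, dist_comm]
          exact hζ.2
        exact mul_le_mul_of_nonneg_left hzd hc0.le
      have key := key_estimate E r g hg hprim z (c * δ) p (bA + ε) hM γ hγ hγ0 himg hlen'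
        (r + 1) le_rfl 1 ⟨zero_le_one, le_rfl⟩
      rw [Nat.sub_self, hγ1] at key
      refine key.trans ?_
      have hl0 : 0 ≤ ∫ u in (0:ℝ)..1, ‖deriv γ u‖ := len_nonneg zero_le_one
      have hpow : (∫ u in (0:ℝ)..1, ‖deriv γ u‖) ^ (r + 1) ≤ (c * δ) ^ (r + 1) :=
        pow_le_pow_left₀ hl0 hlen' _
      calc (bA + ε) * (∫ u in (0:ℝ)..1, ‖deriv γ u‖) ^ (r + 1) / (((r + 1).factorial : ℝ))
          ≤ (bA + ε) * (c * δ) ^ (r + 1) / (((r + 1).factorial : ℝ)) := by gcongr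
        _ = A * (bA + ε) := by rw [hAdef]; ring
    have hsup : supNorm (E ∩ Metric.closedBall z δ)
        (fun w => g 0 w - (Qseq g r z p (r + 1)).eval w) ≤ A * (bA + ε) := by
      have hne : (E ∩ Metric.closedBall z δ).Nonempty :=
        ⟨z, hz, Metric.mem_closedBall_self hδ.le⟩
      exact supNorm_le hne hpt
    have hdeg : (Qseq g r z p (r + 1)).natDegree ≤ k + r :=
      (natDegree_Qseq_le _ _ _ _ _).trans (by omega)
    have hba : bA ≤ ω := bestApprox_le_modulus hE (hg (r + 1) le_rfl) k hz hcδ.le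
    calc bestApprox (k + r) (E ∩ Metric.closedBall z δ) (g 0)
        ≤ supNorm (E ∩ Metric.closedBall z δ)
            (fun w => g 0 w - (Qseq g r z p (r + 1)).eval w) :=
          bestApprox_le _ _ _ _ hdeg
      _ ≤ A * (bA + ε) := hsup
      _ ≤ A * (ω + ε) := mul_le_mul_of_nonneg_left (by linarith) hA.le
  have hlim : bestApprox (k + r) (E ∩ Metric.closedBall z δ) (g 0) ≤ A * ω := by
    refine le_of_forall_pos_le_add fun ε hε => ?_
    have h := hmain (ε / A) (by positivity)
    calc bestApprox (k + r) (E ∩ Metric.closedBall z δ) (g 0)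
        ≤ A * (ω + ε / A) := h
      _ = A * ω + ε := by rw [mul_add, mul_div_cancel₀ _ hA.ne']
  refine hlim.trans ?_
  have hB : A ≤ c * (1 + c) ^ r / (r.factorial : ℝ) * δ ^ (r + 1) := by
    rw [hAdef]
    have h1 : (c * δ) ^ (r + 1) = c * c ^ r * δ ^ (r + 1) := by
      rw [mul_pow, pow_succ]; ring
    have h2 : c ^ r ≤ (1 + c) ^ r := pow_le_pow_left₀ hc0.le (by linarith) r
    have h3 : (r.factorial : ℝ) ≤ ((r + 1).factorial : ℝ) := by
      exact_mod_cast Nat.factorial_le (Nat.le_succ r)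
    have hr0 : (0:ℝ) < (r.factorial : ℝ) := by positivity
    rw [h1]
    calc c * c ^ r * δ ^ (r + 1) / (((r + 1).factorial : ℝ))
        ≤ c * (1 + c) ^ r * δ ^ (r + 1) / ((r.factorial : ℝ)) := by gcongr
      _ = c * (1 + c) ^ r / (r.factorial : ℝ) * δ ^ (r + 1) := by ring
  exact mul_le_mul_of_nonneg_right hB hω0
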